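/- The pair f(x) = x, g(x) = x satisfies Eqs. (VI)–(VII) at every x > 0, but does not satisfy Eq. (I) at any x > 0 (indeed for this pair the left side of (I) is 0 while the right side is 3/(10x²)). -/
import Mathlib


/-- Eq. (I): `g''' = (3/10)·g'·(f')²/f² − (2/5)·g'·f''/f + (3/2)·(g'')²/g'`. -/
def SatEqI (f g : ℝ → ℝ) (x : ℝ) : Prop :=
  (deriv^[3] g x) =
    (3/10) * deriv g x * (deriv f x)^2 / (f x)^2
      - (2/5) * deriv g x * (deriv^[2] f x) / f x
      + (3/2) * (deriv^[2] g x)^2 / deriv g x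

/-- Eq. (VI). -/
def SatEqVI (f g : ℝ → ℝ) (x : ℝ) : Prop :=
  (deriv^[4] g x) =
    6 * (deriv^[2] g x) * (deriv^[3] g x) / deriv g x
      - 2 * deriv g x * (deriv^[3] g x) / g x
      - (2/5) * deriv g x * (deriv^[3] f x) / f x
      + 6 * (deriv^[2] g x)^3 / (deriv g x)^2
      + 3 * (deriv^[2] g x)^2 / g x
      + (4/5) * (deriv^[2] g x) * (deriv^[2] f x) / f x
      - (3/5) * (deriv f x)^2 * (deriv^[2] g x) / (f x)^2
      + deriv g x * deriv f x * (deriv^[2] f x) / (f x)^2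
      - (4/5) * (deriv g x)^2 * (deriv^[2] f x) / (f x * g x)
      - (3/5) * deriv g x * (deriv f x)^3 / (f x)^3
      + (3/5) * (deriv g x)^2 * (deriv f x)^2 / ((f x)^2 * g x)

/-- Eq. (VII). -/
def SatEqVII (f g : ℝ → ℝ) (x : ℝ) : Prop :=
  (deriv^[5] f x) =
    -18 * (deriv f x)^5 / (5 * (f x)^4)
      + 18 * (deriv f x)^4 * deriv g x / (5 * (f x)^3 * g x)
      + 54 * (deriv f x)^3 * (deriv^[2] f x) / (5 * (f x)^3)
      - 48 * (deriv f x)^2 * deriv g x * (deriv^[2] f x) / (5 * (f x)^2 * g x)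
      - 7 * deriv f x * (deriv^[2] f x)^2 / (f x)^2
      + 22 * deriv g x * (deriv^[2] f x)^2 / (5 * f x * g x)
      - 18 * (deriv f x)^4 * (deriv^[2] g x) / (5 * (f x)^3 * deriv g x)
      + 48 * (deriv f x)^2 * (deriv^[2] f x) * (deriv^[2] g x) / (5 * (f x)^2 * deriv g x)
      - 22 * (deriv^[2] f x)^2 * (deriv^[2] g x) / (5 * f x * deriv g x)
      - 22 * (deriv f x)^2 * (deriv^[3] f x) / (5 * (f x)^2)
      + 4 * deriv f x * deriv g x * (deriv^[3] f x) / (f x * g x)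
      + 16 * (deriv^[2] f x) * (deriv^[3] f x) / (5 * f x)
      - 4 * deriv f x * (deriv^[2] g x) * (deriv^[3] f x) / (f x * deriv g x)
      + 2 * deriv f x * (deriv^[4] f x) / f x
      - 4 * deriv g x * (deriv^[4] f x) / g x
      + 4 * (deriv^[2] g x) * (deriv^[4] f x) / deriv g x

/-- the pair `f(x) = x`, `g(x) = x` satisfies Eqs. (VI)–(VII) at every
`x > 0`, but not Eq. (I): the left side of (I) is `0` while the right side is `3/(10x²)`. -/
theorem statement5 :
    ∀ x : ℝ, 0 < x →
      SatEqVI (fun y => y) (fun y => y) x ∧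
      SatEqVII (fun y => y) (fun y => y) x ∧
      ¬ SatEqI (fun y => y) (fun y => y) x ∧
      (deriv^[3] (fun y : ℝ => y) x) = 0 ∧
      (3/10) * deriv (fun y : ℝ => y) x * (deriv (fun y : ℝ => y) x)^2 / ((fun y : ℝ => y) x)^2
        - (2/5) * deriv (fun y : ℝ => y) x * (deriv^[2] (fun y : ℝ => y) x) / ((fun y : ℝ => y) x)
        + (3/2) * (deriv^[2] (fun y : ℝ => y) x)^2 / deriv (fun y : ℝ => y) x
        = 3 / (10 * x^2) := by
  intro x hx
  have h1 : deriv (fun y : ℝ => y) = fun _ => 1 := by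
    funext y; simpa using deriv_id y
  have h2 : (deriv^[2] (fun y : ℝ => y)) = fun _ => 0 := by
    show deriv (deriv (fun y : ℝ => y)) = _
    rw [h1]; funext y; simp
  have h3 : (deriv^[3] (fun y : ℝ => y)) = fun _ => 0 := by
    show deriv (deriv^[2] (fun y : ℝ => y)) = _
    rw [h2]; funext y; simp
  have h4 : (deriv^[4] (fun y : ℝ => y)) = fun _ => 0 := by
    show deriv (deriv^[3] (fun y : ℝ => y)) = _
    rw [h3]; funext y; simp
  have h5 : (deriv^[5] (fun y : ℝ => y)) = fun _ => 0 := by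
    show deriv (deriv^[4] (fun y : ℝ => y)) = _
    rw [h4]; funext y; simp
  have hx0 : x ≠ 0 := ne_of_gt hx
  refine ⟨?_, ?_, ?_, ?_, ?_⟩
  · unfold SatEqVI; rw [h1, h2, h3, h4]; simp; ring
  · unfold SatEqVII; rw [h1, h2, h3, h4, h5]; simp; field_simp; ring
  · unfold SatEqI; rw [h1, h2, h3]; simp
    intro h
    have : (0:ℝ) < 3 / 10 / x ^ 2 := by positivity
    linarith
  · rw [h3]
  · rw [h1, h2]; simp; ring
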